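/- arXiv:2401.16292 — 10 statements merged into one kernel-verified Lean document; each statement's English description precedes it below -/
import Mathlib

section
/- If transactions i and j do not conflict, then their execution functions commute: for every state σ : Obj → V and every object oid, exec j (exec i σ) oid = exec i (exec j σ) oid. -/
/-- Transactions `i` and `j` *conflict* if some object is referenced by both and
written by at least one of them. -/
def Conflict {n : ℕ} {Obj : Type*} [DecidableEq Obj] (R W : Fin n → Finset Obj) (i j : Fin n) : Prop :=
  ∃ oid : Obj, oid ∈ R i ∪ W i ∧ oid ∈ R j ∪ W j ∧ (oid ∈ W i ∨ oid ∈ W j)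

/-- If transactions `i` and `j` do not conflict, then their execution functions commute. -/
theorem nonconflicting_commute {n : ℕ} {Obj V : Type*} [DecidableEq Obj]
    (R W : Fin n → Finset Obj) (hRW : ∀ t : Fin n, Disjoint (R t) (W t))
    (exec : Fin n → (Obj → V) → (Obj → V))
    (hmod : ∀ (t : Fin n) (σ : Obj → V) (oid : Obj), oid ∉ W t → exec t σ oid = σ oid)
    (hdet : ∀ (t : Fin n) (σ σ' : Obj → V),
      (∀ oid ∈ R t ∪ W t, σ oid = σ' oid) → ∀ oid ∈ W t, exec t σ oid = exec t σ' oid)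
    (i j : Fin n) (hconf : ¬ Conflict R W i j)
    (σ : Obj → V) (oid : Obj) :
    exec j (exec i σ) oid = exec i (exec j σ) oid := by
  simp only [Conflict, not_exists] at hconf
  by_cases hi : oid ∈ W i
  · have hj : oid ∉ W j := fun hj =>
      hconf oid ⟨Finset.mem_union_right _ hi, Finset.mem_union_right _ hj, Or.inl hi⟩
    rw [hmod j _ oid hj]
    have := hdet i σ (exec j σ) (fun x hx => by
      have hxj : x ∉ W j := fun hxj =>
        hconf x ⟨hx, Finset.mem_union_right _ hxj, Or.inr hxj⟩
      rw [hmod j σ x hxj]) oid hi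
    rw [← this]
  · by_cases hj : oid ∈ W j
    · rw [hmod i _ oid hi]
      have := hdet j σ (exec i σ) (fun x hx => by
        have hxi : x ∉ W i := fun hxi =>
          hconf x ⟨Finset.mem_union_right _ hxi, hx, Or.inl hxi⟩
        rw [hmod i σ x hxi]) oid hj
      rw [← this]
    · rw [hmod j _ oid hj, hmod i _ oid hi, hmod i _ oid hi, hmod j _ oid hj]
end

section
/- (Pilotfish Serializability.) Let L : List (Fin n) be a permutation of all transactions (L has no duplicates and contains every t : Fin n) such that every pair of conflicting transactions occurs in L in increasing index order: for all i j : Fin n, if i < j and i and j conflict, then i occurs in L strictly before j. Then the sequential execution of L from any initial state σ₀ equals the sequential execution of the index-ordered list List.finRange n from σ₀. -/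
local infixl:50 " <+ " => List.Sublist

section Aux

variable {α : Type*} [DecidableEq α]

lemma sublist_pair_total {L : List α} {i j : α}
    (hi : i ∈ L) (hj : j ∈ L) (hij : i ≠ j) : [i, j] <+ L ∨ [j, i] <+ L := by
  induction L with
  | nil => simp at hi
  | cons a L ih =>
    rcases List.mem_cons.1 hi with rfl | hi'
    · left
      have hj' : j ∈ L := by
        rcases List.mem_cons.1 hj with rfl | h'
        · exact absurd rfl hij
        · exact h'
      exact (List.singleton_sublist.2 hj').cons₂ i
    · rcases List.mem_cons.1 hj with rfl | hj'
      · right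
        exact (List.singleton_sublist.2 hi').cons₂ j
      · rcases ih hi' hj' with h' | h'
        · exact Or.inl (h'.cons a)
        · exact Or.inr (h'.cons a)

lemma sublist_pair_indexOf {L : List α} (h : L.Nodup) {i j : α}
    (hs : [i, j] <+ L) : L.idxOf i < L.idxOf j := by
  induction L with
  | nil => simp at hs
  | cons a L ih =>
    have hij : i ≠ j := by
      have : ([i, j] : List α).Nodup := h.sublist hs
      simpa using this
    cases hs with
    | cons _ hs' =>
      have hiL : i ∈ L := hs'.subset (by simp)
      have hjL : j ∈ L := hs'.subset (by simp)
      have hai : a ≠ i := fun e => (List.nodup_cons.1 h).1 (e ▸ hiL)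
      have haj : a ≠ j := fun e => (List.nodup_cons.1 h).1 (e ▸ hjL)
      rw [List.idxOf_cons_ne _ hai, List.idxOf_cons_ne _ haj]
      exact Nat.succ_lt_succ (ih (List.nodup_cons.1 h).2 hs')
    | cons_cons _ hs' =>
      rw [List.idxOf_cons_self, List.idxOf_cons_ne _ hij]
      exact Nat.succ_pos _

end Aux

section Main

variable {n : ℕ} {Obj V : Type*} [DecidableEq Obj]
variable (R W : Fin n → Finset Obj)
variable (exec : Fin n → (Obj → V) → (Obj → V))

lemma conflict_symm {i j : Fin n} (h : Conflict R W i j) : Conflict R W j i := by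
  obtain ⟨oid, h1, h2, h3⟩ := h
  exact ⟨oid, h2, h1, h3.symm⟩

lemma comm_exec
    (hmod : ∀ (t : Fin n) (σ : Obj → V) (oid : Obj), oid ∉ W t → exec t σ oid = σ oid)
    (hdet : ∀ (t : Fin n) (σ σ' : Obj → V),
      (∀ oid ∈ R t ∪ W t, σ oid = σ' oid) → ∀ oid ∈ W t, exec t σ oid = exec t σ' oid)
    {i j : Fin n} (hc : ¬ Conflict R W i j) (σ : Obj → V) :
    exec j (exec i σ) = exec i (exec j σ) := by
  funext oid
  by_cases hj : oid ∈ W j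
  · have hni : oid ∉ W i := fun hi =>
      hc ⟨oid, Finset.mem_union_right _ hi, Finset.mem_union_right _ hj, Or.inl hi⟩
    rw [hmod i (exec j σ) oid hni]
    exact hdet j (exec i σ) σ
      (fun o ho => hmod i σ o (fun hoi =>
        hc ⟨o, Finset.mem_union_right _ hoi, ho, Or.inl hoi⟩)) oid hj
  · by_cases hi : oid ∈ W i
    · rw [hmod j (exec i σ) oid hj]
      exact (hdet i (exec j σ) σ
        (fun o ho => hmod j σ o (fun hoj =>
          hc ⟨o, ho, Finset.mem_union_right _ hoj, Or.inr hoj⟩)) oid hi).symm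
    · rw [hmod j (exec i σ) oid hj, hmod i σ oid hi, hmod i (exec j σ) oid hi,
        hmod j σ oid hj]

lemma pull_front
    (hmod : ∀ (t : Fin n) (σ : Obj → V) (oid : Obj), oid ∉ W t → exec t σ oid = σ oid)
    (hdet : ∀ (t : Fin n) (σ σ' : Obj → V),
      (∀ oid ∈ R t ∪ W t, σ oid = σ' oid) → ∀ oid ∈ W t, exec t σ oid = exec t σ' oid)
    {t : Fin n} :
    ∀ (A B : List (Fin n)) (σ : Obj → V), (∀ x ∈ A, ¬ Conflict R W x t) →
      (A ++ t :: B).foldl (fun σ t => exec t σ) σ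
        = (t :: (A ++ B)).foldl (fun σ t => exec t σ) σ := by
  intro A
  induction A with
  | nil => intro B σ _; rfl
  | cons a A ih =>
    intro B σ hA
    simp only [List.cons_append, List.foldl_cons]
    rw [ih B (exec a σ) (fun x hx => hA x (List.mem_cons_of_mem _ hx))]
    simp only [List.foldl_cons]
    rw [comm_exec R W exec hmod hdet (hA a List.mem_cons_self) σ]

lemma aux_main
    (hmod : ∀ (t : Fin n) (σ : Obj → V) (oid : Obj), oid ∉ W t → exec t σ oid = σ oid)
    (hdet : ∀ (t : Fin n) (σ σ' : Obj → V),
      (∀ oid ∈ R t ∪ W t, σ oid = σ' oid) → ∀ oid ∈ W t, exec t σ oid = exec t σ' oid) :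
    ∀ (L₂ L₁ : List (Fin n)), L₁.Nodup → L₁.Perm L₂ →
      (∀ i j : Fin n, Conflict R W i j → [i, j] <+ L₂ → [i, j] <+ L₁) →
      ∀ σ : Obj → V,
        L₁.foldl (fun σ t => exec t σ) σ = L₂.foldl (fun σ t => exec t σ) σ := by
  intro L₂
  induction L₂ with
  | nil =>
    intro L₁ _ hp _ σ
    rw [hp.eq_nil]
  | cons t B ih =>
    intro L₁ hnd hp hcond σ
    have ht : t ∈ L₁ := hp.mem_iff.2 List.mem_cons_self
    obtain ⟨A, A', rfl⟩ := List.append_of_mem ht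
    have htA : t ∉ A := fun h =>
      (List.disjoint_of_nodup_append hnd) h List.mem_cons_self
    have hnd2 : (t :: B).Nodup := hp.nodup_iff.1 hnd
    have hperm' : (A ++ A').Perm B :=
      ((List.perm_middle.symm.trans hp)).cons_inv
    have hnd' : (A ++ A').Nodup :=
      ((List.perm_middle.nodup_iff).1 hnd).of_cons
    have hnoc : ∀ x ∈ A, ¬ Conflict R W x t := by
      intro x hx hcxt
      have hxt : x ≠ t := fun e => htA (e ▸ hx)
      have hxB : x ∈ B := by
        have : x ∈ t :: B := hp.mem_iff.1 (by simp [hx])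
        rcases List.mem_cons.1 this with e | h'
        · exact absurd e hxt
        · exact h'
      have hsub : [t, x] <+ t :: B := (List.singleton_sublist.2 hxB).cons₂ t
      have hsub' : [t, x] <+ A ++ t :: A' :=
        hcond t x (conflict_symm R W hcxt) hsub
      have hidx : (A ++ t :: A').idxOf t < (A ++ t :: A').idxOf x :=
        sublist_pair_indexOf hnd hsub'
      have hxlt : (A ++ t :: A').idxOf x < A.length := by
        rw [List.idxOf_append_of_mem hx]
        exact List.idxOf_lt_length_iff.2 hx
      have htge : (A ++ t :: A').idxOf t = A.length := by
        rw [List.idxOf_append_of_notMem htA, List.idxOf_cons_self]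
        omega
      omega
    rw [pull_front R W exec hmod hdet A A' σ hnoc]
    simp only [List.foldl_cons]
    apply ih (A ++ A') hnd' hperm' ?_ (exec t σ)
    intro i j hcij hsub
    have htnB : t ∉ B := (List.nodup_cons.1 hnd2).1
    have hiB : i ∈ B := hsub.subset (by simp)
    have hjB : j ∈ B := hsub.subset (by simp)
    have hsub2 : [i, j] <+ A ++ t :: A' := hcond i j hcij (hsub.cons t)
    have hti : t ∉ ([i, j] : List (Fin n)) := by
      intro h
      rcases List.mem_cons.1 h with e | h'
      · exact htnB (e ▸ hiB)
      · simp at h'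
        exact htnB (h' ▸ hjB)
    have := hsub2.erase t
    rwa [List.erase_of_not_mem hti, List.erase_append_right _ htA,
      List.erase_cons_head] at this

end Main

/-- **Pilotfish Serializability.** If `L` is a permutation of all transactions in which
every pair of conflicting transactions occurs in increasing index order, then sequential
execution of `L` equals sequential execution of the index-ordered list `List.finRange n`. -/
theorem pilotfish_serializability {n : ℕ} {Obj V : Type*} [DecidableEq Obj]
    (R W : Fin n → Finset Obj) (hRW : ∀ t : Fin n, Disjoint (R t) (W t))
    (exec : Fin n → (Obj → V) → (Obj → V))
    (hmod : ∀ (t : Fin n) (σ : Obj → V) (oid : Obj), oid ∉ W t → exec t σ oid = σ oid)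
    (hdet : ∀ (t : Fin n) (σ σ' : Obj → V),
      (∀ oid ∈ R t ∪ W t, σ oid = σ' oid) → ∀ oid ∈ W t, exec t σ oid = exec t σ' oid)
    (L : List (Fin n)) (hnodup : L.Nodup) (hall : ∀ t : Fin n, t ∈ L)
    (horder : ∀ i j : Fin n, i < j → Conflict R W i j → L.idxOf i < L.idxOf j)
    (σ₀ : Obj → V) :
    L.foldl (fun σ t => exec t σ) σ₀ = (List.finRange n).foldl (fun σ t => exec t σ) σ₀ := by
  apply aux_main R W exec hmod hdet (List.finRange n) L hnodup
  · exact (List.perm_ext_iff_of_nodup hnodup (List.nodup_finRange n)).2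
      (fun a => ⟨fun _ => List.mem_finRange a, fun _ => hall a⟩)
  · intro i j hc hsub
    have hij : i < j := by
      have hpw : List.Pairwise (· < ·) ([i, j] : List (Fin n)) :=
        (List.pairwise_lt_finRange n).sublist hsub
      simpa using hpw
    have hidx := horder i j hij hc
    rcases sublist_pair_total (hall i) (hall j) (ne_of_lt hij) with h | h
    · exact h
    · exact absurd (sublist_pair_indexOf hnodup h) (by omega)
end

section
/- (Transactions Order in Queues.) Let L be a list of pairwise distinct transactions, let i and j be transactions occurring in L with i occurring strictly before j, and suppose i and j conflict on oid. Then both i and j occur in the pending queue for oid built from L, each appears in the transaction list of exactly one entry, and the position of the entry containing i is strictly smaller than the position of the entry containing j. -/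
/-- Tag of a pending-queue entry: `read` or `write`. -/
inductive Tag : Type
  | read : Tag
  | write : Tag
  deriving DecidableEq

/-- One folding step building the pending queue for object `oid`:
if `t` writes `oid`, append a new `(write, [t])` entry; otherwise if `t` reads `oid`,
append `t` to the last entry when it is a read entry, and otherwise start a new
`(read, [t])` entry; if `t` does not reference `oid`, leave the queue unchanged. -/
def pendingStep {Tx Obj : Type} [DecidableEq Obj] (R W : Tx → Finset Obj) (oid : Obj)
    (q : List (Tag × List Tx)) (t : Tx) : List (Tag × List Tx) :=
  if oid ∈ W t then q ++ [(Tag.write, [t])]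
  else if oid ∈ R t then
    match q.getLast? with
    | some (Tag.read, ts) => q.dropLast ++ [(Tag.read, ts ++ [t])]
    | _ => q ++ [(Tag.read, [t])]
  else q

/-- The pending queue for object `oid` built from the list of transactions `L`. -/
def pendingQueue {Tx Obj : Type} [DecidableEq Obj] (R W : Tx → Finset Obj) (oid : Obj)
    (L : List Tx) : List (Tag × List Tx) :=
  L.foldl (pendingStep R W oid) []

lemma pendingQueue_concat {Tx Obj : Type} [DecidableEq Obj] (R W : Tx → Finset Obj)
    (oid : Obj) (L : List Tx) (t : Tx) :
    pendingQueue R W oid (L ++ [t]) = pendingStep R W oid (pendingQueue R W oid L) t := by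
  simp [pendingQueue, List.foldl_append]

lemma eq_dropLast_concat {α : Type*} {q : List α} {e : α} (h : q.getLast? = some e) :
    q = q.dropLast ++ [e] := by
  induction q using List.reverseRecOn with
  | nil => simp at h
  | append_singleton q' x _ =>
    rw [List.getLast?_concat] at h
    cases h
    rw [List.dropLast_concat]

lemma pair_sublist_flatten {α : Type*} {ll : List (List α)} {k k' : ℕ} (hk : k < ll.length)
    (hk' : k' < ll.length) (hkk : k < k') {x y : α}
    (hx : x ∈ ll.get ⟨k, hk⟩) (hy : y ∈ ll.get ⟨k', hk'⟩) :
    List.Sublist [x, y] ll.flatten := by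
  have h1 : ll.get ⟨k, hk⟩ ∈ ll.take k' := by
    have hlen : k < (ll.take k').length := by simp [hkk, hk]
    have := List.getElem_take (xs := ll) (h := hlen)
    rw [List.get_eq_getElem, ← this]
    exact List.getElem_mem _
  have h2 : ll.get ⟨k', hk'⟩ ∈ ll.drop k' := by
    have hlen : 0 < (ll.drop k').length := by simp; omega
    have := List.getElem_drop (xs := ll) (i := k') (j := 0) (h := hlen)
    simp only [Nat.add_zero] at this
    rw [List.get_eq_getElem, ← this]
    exact List.getElem_mem _
  have hx' : List.Sublist [x] (ll.take k').flatten :=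
    List.singleton_sublist.2 (List.mem_flatten.2 ⟨_, h1, hx⟩)
  have hy' : List.Sublist [y] (ll.drop k').flatten :=
    List.singleton_sublist.2 (List.mem_flatten.2 ⟨_, h2, hy⟩)
  have := hx'.append hy'
  rwa [← List.flatten_append, List.take_append_drop] at this

lemma indexOf_lt_of_pair_sublist {α : Type*} [DecidableEq α] {l : List α} {a b : α}
    (h : List.Sublist [a, b] l) (hnd : l.Nodup) : l.idxOf a < l.idxOf b := by
  induction l with
  | nil => simp at h
  | cons c l ih =>
    rcases hnd with _ | ⟨hc, hnd⟩
    cases h with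
    | cons _ h =>
      have ha : a ∈ l := (h.subset) (by simp)
      have hb : b ∈ l := (h.subset) (by simp)
      rw [List.idxOf_cons_ne _ (hc a ha), List.idxOf_cons_ne _ (hc b hb)]
      exact Nat.succ_lt_succ (ih h hnd)
    | cons_cons _ h =>
      have hb : b ∈ l := (h.subset) (by simp)
      rw [List.idxOf_cons_self, List.idxOf_cons_ne _ (hc b hb)]
      exact Nat.succ_pos _

theorem flatten_pendingQueue {Tx Obj : Type} [DecidableEq Obj] (R W : Tx → Finset Obj)
    (oid : Obj) (L : List Tx) :
    ((pendingQueue R W oid L).map Prod.snd).flatten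
      = L.filter (fun t => decide (oid ∈ R t ∪ W t)) := by
  induction L using List.reverseRecOn with
  | nil => rfl
  | append_singleton L t ih =>
    rw [pendingQueue_concat, List.filter_append]
    set q := pendingQueue R W oid L with hqdef
    unfold pendingStep
    by_cases hW : oid ∈ W t
    · have hfil : List.filter (fun t => decide (oid ∈ R t ∪ W t)) [t] = [t] := by
        simp [Finset.mem_union, hW]
      rw [if_pos hW, hfil, List.map_append, List.flatten_append, ih]
      simp
    · by_cases hR : oid ∈ R t
      · have hfil : List.filter (fun t => decide (oid ∈ R t ∪ W t)) [t] = [t] := by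
          simp [Finset.mem_union, hR]
        rw [if_neg hW, if_pos hR, hfil]
        rcases hlast : q.getLast? with _ | ⟨tag, ts⟩
        · rw [List.map_append, List.flatten_append, ih]; simp
        · cases tag with
          | read =>
            have hq := eq_dropLast_concat hlast
            calc ((q.dropLast ++ [(Tag.read, ts ++ [t])]).map Prod.snd).flatten
                = ((q.dropLast ++ [(Tag.read, ts)]).map Prod.snd).flatten ++ [t] := by
                  simp
              _ = (q.map Prod.snd).flatten ++ [t] := by rw [← hq]
              _ = _ := by rw [ih]
          | write => rw [List.map_append, List.flatten_append, ih]; simp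
      · have hfil : List.filter (fun t => decide (oid ∈ R t ∪ W t)) [t] = [] := by
          simp [Finset.mem_union, hR, hW]
        rw [if_neg hW, if_neg hR, hfil, List.append_nil, ih]

theorem entries_pendingQueue {Tx Obj : Type} [DecidableEq Obj] (R W : Tx → Finset Obj)
    (oid : Obj) (L : List Tx) :
    ∀ e ∈ pendingQueue R W oid L,
      (e.1 = Tag.read → ∀ t ∈ e.2, oid ∈ R t) ∧ (e.1 = Tag.write → ∃ t, e.2 = [t]) := by
  induction L using List.reverseRecOn with
  | nil => intro e he; simp [pendingQueue] at he
  | append_singleton L t ih =>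
    intro e he
    rw [pendingQueue_concat] at he
    unfold pendingStep at he
    by_cases hW : oid ∈ W t
    · rw [if_pos hW, List.mem_append] at he
      rcases he with he | he
      · exact ih e he
      · simp at he; subst he
        exact ⟨by simp, fun _ => ⟨t, rfl⟩⟩
    · by_cases hR : oid ∈ R t
      · rw [if_neg hW, if_pos hR] at he
        rcases hlast : (pendingQueue R W oid L).getLast? with _ | ⟨tag, ts⟩
        · rw [hlast] at he
          simp only [List.mem_append] at he
          rcases he with he | he
          · exact ih e he
          · simp at he; subst he
            refine ⟨fun _ t' ht' => ?_, by simp⟩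
            simp at ht'; subst ht'; exact hR
        · cases tag with
          | read =>
            rw [hlast] at he
            simp only [List.mem_append] at he
            rcases he with he | he
            · exact ih e ((List.dropLast_sublist _).mem he)
            · simp at he; subst he
              have hmem : (Tag.read, ts) ∈ pendingQueue R W oid L := by
                conv => rw [eq_dropLast_concat hlast]
                simp
              have hts := (ih _ hmem).1 rfl
              refine ⟨fun _ t' ht' => ?_, by simp⟩
              rw [List.mem_append] at ht'
              rcases ht' with ht' | ht'
              · exact hts t' ht'
              · simp at ht'; subst ht'; exact hR
          | write =>
            rw [hlast] at he
            simp only [List.mem_append] at he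
            rcases he with he | he
            · exact ih e he
            · simp at he; subst he
              refine ⟨fun _ t' ht' => ?_, by simp⟩
              simp at ht'; subst ht'; exact hR
      · rw [if_neg hW, if_neg hR] at he
        exact ih e he

/-- **Transactions Order in Queues.** If `i` occurs in `L` strictly before `j` and `i`, `j`
conflict on `oid`, then `i` and `j` each appear in the transaction list of exactly one entry
of the pending queue for `oid`, and the entry containing `i` precedes the entry containing `j`. -/
theorem pending_queue_order {Tx Obj : Type} [DecidableEq Tx] [DecidableEq Obj]
    (R W : Tx → Finset Obj) (hRW : ∀ t : Tx, Disjoint (R t) (W t))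
    (L : List Tx) (hL : L.Nodup)
    (i j : Tx) (oid : Obj)
    (hiL : i ∈ L) (hjL : j ∈ L) (hbefore : L.idxOf i < L.idxOf j)
    (hconf : oid ∈ R i ∪ W i ∧ oid ∈ R j ∪ W j ∧ (oid ∈ W i ∨ oid ∈ W j)) :
    ∃ (ki kj : ℕ) (hki : ki < (pendingQueue R W oid L).length)
      (hkj : kj < (pendingQueue R W oid L).length),
      ki < kj ∧
      i ∈ ((pendingQueue R W oid L).get ⟨ki, hki⟩).2 ∧
      j ∈ ((pendingQueue R W oid L).get ⟨kj, hkj⟩).2 ∧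
      (∀ (k : ℕ) (hk : k < (pendingQueue R W oid L).length),
        i ∈ ((pendingQueue R W oid L).get ⟨k, hk⟩).2 → k = ki) ∧
      (∀ (k : ℕ) (hk : k < (pendingQueue R W oid L).length),
        j ∈ ((pendingQueue R W oid L).get ⟨k, hk⟩).2 → k = kj) := by
  set q := pendingQueue R W oid L with hqdef
  have hij : i ≠ j := fun e => absurd hbefore (by rw [e]; exact lt_irrefl _)
  have hJf : ((q.map Prod.snd).flatten) = L.filter (fun t => decide (oid ∈ R t ∪ W t)) :=
    flatten_pendingQueue R W oid L
  have hJnd : ((q.map Prod.snd).flatten).Nodup := by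
    rw [hJf]; exact hL.filter _
  -- key: elements in earlier entries come earlier
  have key : ∀ (k k' : ℕ) (hk : k < q.length) (hk' : k' < q.length), k < k' →
      ∀ x y : Tx, x ∈ (q.get ⟨k, hk⟩).2 → y ∈ (q.get ⟨k', hk'⟩).2 →
      List.Sublist [x, y] ((q.map Prod.snd).flatten) := by
    intro k k' hk hk' hkk x y hx hy
    have hkm : k < (q.map Prod.snd).length := by simpa using hk
    have hkm' : k' < (q.map Prod.snd).length := by simpa using hk'
    refine pair_sublist_flatten hkm hkm' hkk ?_ ?_
    · simpa using hx
    · simpa using hy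
  -- existence of entries
  have exists_entry : ∀ x : Tx, x ∈ L → oid ∈ R x ∪ W x →
      ∃ (k : ℕ) (hk : k < q.length), x ∈ (q.get ⟨k, hk⟩).2 := by
    intro x hxL hxref
    have hxJ : x ∈ (q.map Prod.snd).flatten := by
      rw [hJf]
      exact List.mem_filter.2 ⟨hxL, by simpa using hxref⟩
    obtain ⟨l, hl, hxl⟩ := List.mem_flatten.1 hxJ
    obtain ⟨e, he, rfl⟩ := List.mem_map.1 hl
    obtain ⟨n, hn⟩ := List.mem_iff_get.1 he
    exact ⟨n, n.isLt, by rw [hn]; exact hxl⟩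
  -- uniqueness of entries
  have uniq : ∀ (x : Tx) (k k' : ℕ) (hk : k < q.length) (hk' : k' < q.length),
      x ∈ (q.get ⟨k, hk⟩).2 → x ∈ (q.get ⟨k', hk'⟩).2 → k = k' := by
    intro x k k' hk hk' h1 h2
    by_contra hne
    have : List.Sublist [x, x] ((q.map Prod.snd).flatten) := by
      rcases Nat.lt_or_ge k k' with h | h
      · exact key k k' hk hk' h x x h1 h2
      · exact key k' k hk' hk (lt_of_le_of_ne h (Ne.symm hne)) x x h2 h1
    have := this.nodup hJnd
    simp at this
  obtain ⟨ki, hki, hi⟩ := exists_entry i hiL hconf.1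
  obtain ⟨kj, hkj, hj⟩ := exists_entry j hjL hconf.2.1
  -- i and j are in different entries
  have hne : ki ≠ kj := by
    intro e
    subst e
    have hmem : q.get ⟨ki, hki⟩ ∈ q := List.get_mem _ _
    have hent := entries_pendingQueue R W oid L _ hmem
    cases htag : (q.get ⟨ki, hki⟩).1 with
    | read =>
      have hRi := hent.1 htag i hi
      have hRj := hent.1 htag j hj
      rcases hconf.2.2 with hw | hw
      · exact (Finset.disjoint_left.1 (hRW i)) hRi hw
      · exact (Finset.disjoint_left.1 (hRW j)) hRj hw
    | write =>
      obtain ⟨t, ht⟩ := hent.2 htag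
      rw [ht] at hi hj
      simp at hi hj
      exact hij (hi.trans hj.symm)
  -- order
  have horder : ki < kj := by
    rcases Nat.lt_or_ge ki kj with h | h
    · exact h
    · exfalso
      have hlt : kj < ki := lt_of_le_of_ne h (Ne.symm hne)
      have hsub : List.Sublist [j, i] ((q.map Prod.snd).flatten) :=
        key kj ki hkj hki hlt j i hj hi
      have hsubL : List.Sublist [j, i] L := by
        rw [hJf] at hsub
        exact hsub.trans (List.filter_sublist (l := L))
      have := indexOf_lt_of_pair_sublist hsubL hL
      omega
  exact ⟨ki, kj, hki, hkj, horder, hi, hj,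
    fun k hk hik => uniq i k ki hk hki hik hi,
    fun k hk hjk => uniq j k kj hk hkj hjk hj⟩
end

section
/- (Structure of pending queues.) In the pending queue for oid built from a list L of pairwise distinct transactions: every entry tagged Write has a transaction list of length exactly one; every transaction appearing in an entry tagged Read satisfies oid ∈ R t; consequently, any two distinct transactions lying in the same entry both only read oid and hence do not conflict on oid. Moreover, the concatenation of the transaction lists of all entries is exactly the sublist of L consisting of the transactions that reference oid, in the order of L. -/
section Aux

variable {Tx Obj : Type} [DecidableEq Obj] (R W : Tx → Finset Obj) (oid : Obj)

/-- Invariant maintained by the fold. -/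
def PQInv (q : List (Tag × List Tx)) : Prop :=
  (∀ e ∈ q, e.1 = Tag.write → e.2.length = 1) ∧
  (∀ e ∈ q, e.1 = Tag.read → ∀ t ∈ e.2, oid ∈ R t)

lemma pendingStep_inv (q : List (Tag × List Tx)) (t : Tx) (hq : PQInv R oid q) :
    PQInv R oid (pendingStep R W oid q t) ∧
    ((pendingStep R W oid q t).map Prod.snd).flatten =
      (q.map Prod.snd).flatten ++ (if oid ∈ R t ∪ W t then [t] else []) := by
  obtain ⟨h1, h2⟩ := hq
  unfold pendingStep
  by_cases hW : oid ∈ W t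
  · simp only [hW, if_true]
    refine ⟨⟨?_, ?_⟩, ?_⟩
    · intro e he htag
      rcases List.mem_append.mp he with h | h
      · exact h1 e h htag
      · simp at h; subst h; rfl
    · intro e he htag
      rcases List.mem_append.mp he with h | h
      · exact h2 e h htag
      · simp at h; subst h; simp at htag
    · have : oid ∈ R t ∪ W t := Finset.mem_union_right _ hW
      simp [this]
  · simp only [hW, if_false]
    by_cases hR : oid ∈ R t
    · simp only [hR, if_true]
      have hmem : oid ∈ R t ∪ W t := Finset.mem_union_left _ hR
      split
      · rename_i ts h
        have hqeq : q.dropLast ++ [(Tag.read, ts)] = q :=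
          List.dropLast_append_getLast? _ h
        have hts : (Tag.read, ts) ∈ q := by
          rw [← hqeq]; exact List.mem_append_right _ (by simp)
        refine ⟨⟨?_, ?_⟩, ?_⟩
        · intro e he htag
          rcases List.mem_append.mp he with h' | h'
          · exact h1 e (by rw [← hqeq]; exact List.mem_append_left _ h') htag
          · simp at h'; subst h'; simp at htag
        · intro e he htag u hu
          rcases List.mem_append.mp he with h' | h'
          · exact h2 e (by rw [← hqeq]; exact List.mem_append_left _ h') htag u hu
          · simp at h'; subst h'
            simp at hu
            rcases hu with hu | hu
            · exact h2 _ hts rfl u hu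
            · subst hu; exact hR
        · conv_rhs => rw [← hqeq]
          simp [hmem]
      · refine ⟨⟨?_, ?_⟩, ?_⟩
        · intro e he htag
          rcases List.mem_append.mp he with h' | h'
          · exact h1 e h' htag
          · simp at h'; subst h'; rfl
        · intro e he htag u hu
          rcases List.mem_append.mp he with h' | h'
          · exact h2 e h' htag u hu
          · simp at h'; subst h'; simp at hu; subst hu; exact hR
        · simp [hmem]
    · simp only [hR, if_false]
      have : oid ∉ R t ∪ W t := by simp [hR, hW]
      refine ⟨⟨h1, h2⟩, by simp [this]⟩

lemma pendingQueue_aux (L : List Tx) :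
    ∀ q : List (Tag × List Tx), PQInv R oid q →
      PQInv R oid (L.foldl (pendingStep R W oid) q) ∧
      ((L.foldl (pendingStep R W oid) q).map Prod.snd).flatten =
        (q.map Prod.snd).flatten ++ L.filter (fun t => decide (oid ∈ R t ∪ W t)) := by
  induction L with
  | nil => intro q hq; exact ⟨hq, by simp⟩
  | cons t L ih =>
    intro q hq
    obtain ⟨hinv, hflat⟩ := pendingStep_inv R W oid q t hq
    obtain ⟨hinv', hflat'⟩ := ih _ hinv
    refine ⟨hinv', ?_⟩
    rw [List.foldl_cons] at *
    rw [hflat', hflat, List.filter_cons]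
    by_cases h : oid ∈ R t ∪ W t <;> simp [h]

end Aux

/-- **Structure of pending queues.** Every write entry holds exactly one transaction;
every transaction in a read entry reads `oid`; two distinct transactions in the same
entry both only read `oid` and do not conflict on `oid`; and the concatenation of the
entries' transaction lists is exactly the sublist of `L` of transactions referencing `oid`. -/
theorem pending_queue_structure {Tx Obj : Type} [DecidableEq Obj]
    (R W : Tx → Finset Obj) (hRW : ∀ t : Tx, Disjoint (R t) (W t))
    (L : List Tx) (hL : L.Nodup) (oid : Obj) :
    (∀ e ∈ pendingQueue R W oid L, e.1 = Tag.write → e.2.length = 1) ∧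
    (∀ e ∈ pendingQueue R W oid L, e.1 = Tag.read → ∀ t ∈ e.2, oid ∈ R t) ∧
    (∀ e ∈ pendingQueue R W oid L, ∀ i ∈ e.2, ∀ j ∈ e.2, i ≠ j →
      oid ∈ R i ∧ oid ∈ R j ∧
      ¬(oid ∈ R i ∪ W i ∧ oid ∈ R j ∪ W j ∧ (oid ∈ W i ∨ oid ∈ W j))) ∧
    ((pendingQueue R W oid L).map Prod.snd).flatten =
      L.filter (fun t => decide (oid ∈ R t ∪ W t)) := by
  obtain ⟨⟨h1, h2⟩, hflat⟩ := pendingQueue_aux R W oid L [] ⟨by simp, by simp⟩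
  refine ⟨h1, h2, ?_, by simpa [pendingQueue] using hflat⟩
  intro e he i hi j hj hij
  have hread : e.1 = Tag.read := by
    cases htag : e.1 with
    | read => rfl
    | write =>
      exfalso
      have := h1 e he htag
      obtain ⟨a, ha⟩ := List.length_eq_one_iff.mp this
      rw [ha] at hi hj
      simp at hi hj
      exact hij (hi.trans hj.symm)
  have hRi := h2 e he hread i hi
  have hRj := h2 e he hread j hj
  refine ⟨hRi, hRj, ?_⟩
  rintro ⟨-, -, h | h⟩
  · exact Finset.disjoint_left.mp (hRW i) hRi h
  · exact Finset.disjoint_left.mp (hRW j) hRj h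
end

section
/- (Characterization of the head of a pending queue.) Let L be a list of pairwise distinct transactions and oid an object. A transaction t belongs to the transaction list of the first entry of the pending queue for oid built from L if and only if t occurs in L, t references oid, and for every transaction t' occurring in L strictly before t that references oid, both oid ∈ R t' and oid ∈ R t hold. -/
section Aux
variable {Tx Obj : Type} [DecidableEq Obj] {R W : Tx → Finset Obj} {oid : Obj}

lemma pendingStep_write {q : List (Tag × List Tx)} {t : Tx} (h : oid ∈ W t) :
    pendingStep R W oid q t = q ++ [(Tag.write, [t])] := by
  simp [pendingStep, h]

lemma pendingStep_skip {q : List (Tag × List Tx)} {t : Tx} (hW : oid ∉ W t) (hR : oid ∉ R t) :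
    pendingStep R W oid q t = q := by
  simp [pendingStep, hW, hR]

lemma pendingStep_read_last_read {q : List (Tag × List Tx)} {t : Tx} {ts : List Tx}
    (hW : oid ∉ W t) (hR : oid ∈ R t) (h : q.getLast? = some (Tag.read, ts)) :
    pendingStep R W oid q t = q.dropLast ++ [(Tag.read, ts ++ [t])] := by
  simp [pendingStep, hW, hR, h]

lemma pendingStep_read_other {q : List (Tag × List Tx)} {t : Tx}
    (hW : oid ∉ W t) (hR : oid ∈ R t) (h : ∀ ts, q.getLast? ≠ some (Tag.read, ts)) :
    pendingStep R W oid q t = q ++ [(Tag.read, [t])] := by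
  rcases hq : q.getLast? with _ | ⟨tag, ts⟩
  · simp [pendingStep, hW, hR, hq]
  · cases tag with
    | read => exact absurd hq (h ts)
    | write => simp [pendingStep, hW, hR, hq]

lemma head_stable : ∀ (L : List Tx) (q : List (Tag × List Tx)), q ≠ [] →
    (∀ ts, q.getLast? = some (Tag.read, ts) → 2 ≤ q.length) →
    (List.foldl (pendingStep R W oid) q L).head? = q.head?
  | [], q, hq, hinv => rfl
  | a :: L, q, hq, hinv => by
    have hstep : (pendingStep R W oid q a).head? = q.head? ∧
        (pendingStep R W oid q a) ≠ [] ∧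
        (∀ ts, (pendingStep R W oid q a).getLast? = some (Tag.read, ts) →
          2 ≤ (pendingStep R W oid q a).length) := by
      by_cases hW : oid ∈ W a
      · rw [pendingStep_write hW]
        refine ⟨?_, by simp, ?_⟩
        · rw [List.head?_append]; cases q with
          | nil => exact absurd rfl hq
          | cons x l => simp
        · intro ts h; rw [List.getLast?_concat] at h; exact absurd h (by simp)
      · by_cases hR : oid ∈ R a
        · rcases hlast : q.getLast? with _ | ⟨tag, ts⟩
          · rw [pendingStep_read_other hW hR (by simp [hlast])]
            refine ⟨?_, by simp, ?_⟩
            · rw [List.head?_append]; cases q with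
              | nil => exact absurd rfl hq
              | cons x l => simp
            · intro ts h; rw [List.getLast?_concat] at h
              cases q with
              | nil => exact absurd rfl hq
              | cons x l => simp
          · cases tag with
            | write =>
              rw [pendingStep_read_other hW hR (by simp [hlast])]
              refine ⟨?_, by simp, ?_⟩
              · rw [List.head?_append]; cases q with
                | nil => exact absurd rfl hq
                | cons x l => simp
              · intro ts' h; rw [List.getLast?_concat] at h
                cases q with
                | nil => exact absurd rfl hq
                | cons x l => simp
            | read =>
              have hlen : 2 ≤ q.length := hinv ts hlast
              rw [pendingStep_read_last_read hW hR hlast]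
              refine ⟨?_, by simp, ?_⟩
              · rw [List.head?_append]
                match q, hlen with
                | x :: y :: l, _ => simp
              · intro ts' _
                have hd : q.dropLast.length = q.length - 1 := List.length_dropLast
                simp only [List.length_append, hd, List.length_cons, List.length_nil]
                omega
        · rw [pendingStep_skip hW hR]; exact ⟨rfl, hq, hinv⟩
    rw [List.foldl_cons, head_stable L _ hstep.2.1 hstep.2.2, hstep.1]

lemma read_run (hRW : ∀ t : Tx, Disjoint (R t) (W t)) :
    ∀ (L : List Tx) (ts : List Tx),
    (List.foldl (pendingStep R W oid) [(Tag.read, ts)] L).head? =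
      some (Tag.read, ts ++ (L.filter (fun x => decide (oid ∈ R x ∪ W x))).takeWhile
        (fun x => decide (oid ∈ R x)))
  | [], ts => by simp
  | a :: L, ts => by
    rw [List.foldl_cons]
    by_cases hW : oid ∈ W a
    · rw [pendingStep_write hW, head_stable L _ (by simp) (by simp)]
      have hnR : oid ∉ R a := fun h => Finset.disjoint_left.mp (hRW a) h hW
      simp [List.filter_cons, List.takeWhile_cons, hW, hnR]
    · by_cases hR : oid ∈ R a
      · rw [pendingStep_read_last_read hW hR (ts := ts) (by simp)]
        simp only [List.dropLast_singleton, List.nil_append]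
        rw [read_run hRW L (ts ++ [a])]
        simp [List.filter_cons, List.takeWhile_cons, hW, hR]
      · rw [pendingStep_skip hW hR, read_run hRW L ts]
        simp [List.filter_cons, hW, hR]

lemma pendingQueue_head (hRW : ∀ t : Tx, Disjoint (R t) (W t)) :
    ∀ (L : List Tx),
    (pendingQueue R W oid L).head? =
      match L.filter (fun x => decide (oid ∈ R x ∪ W x)) with
      | [] => none
      | a :: rest => if oid ∈ W a then some (Tag.write, [a])
          else some (Tag.read, a :: rest.takeWhile (fun x => decide (oid ∈ R x)))
  | [] => rfl
  | a :: L => by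
    unfold pendingQueue
    rw [List.foldl_cons]
    by_cases hW : oid ∈ W a
    · rw [pendingStep_write hW]
      simp only [List.nil_append]
      rw [head_stable L _ (by simp) (by simp)]
      simp [List.filter_cons, hW]
    · by_cases hR : oid ∈ R a
      · rw [pendingStep_read_other hW hR (by simp)]
        simp only [List.nil_append]
        rw [read_run hRW L [a]]
        simp [List.filter_cons, List.takeWhile_cons, hW, hR]
      · rw [pendingStep_skip hW hR]
        have := pendingQueue_head hRW L
        unfold pendingQueue at this
        rw [this]
        simp [List.filter_cons, hW, hR]

end Aux

section Main
variable {Tx Obj : Type} [DecidableEq Tx] [DecidableEq Obj] {R W : Tx → Finset Obj} {oid : Obj}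

/-- The right-hand side predicate of the main theorem. -/
def Pc (R : Tx → Finset Obj) (W : Tx → Finset Obj) (oid : Obj) (L : List Tx) (t : Tx) : Prop :=
  t ∈ L ∧ oid ∈ R t ∪ W t ∧
    ∀ t' ∈ L, L.idxOf t' < L.idxOf t → oid ∈ R t' ∪ W t' →
      oid ∈ R t' ∧ oid ∈ R t

lemma Pc_cons_nonref {a t : Tx} {L : List Tx} (ha : a ∉ L) (hna : oid ∉ R a ∪ W a) :
    Pc R W oid (a :: L) t ↔ Pc R W oid L t := by
  constructor
  · rintro ⟨ht, href, h3⟩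
    have hta : t ≠ a := by rintro rfl; exact hna href
    refine ⟨(List.mem_cons.mp ht).resolve_left hta, href, ?_⟩
    intro t' ht' hidx hrefs'
    have ht'a : t' ≠ a := fun h => ha (h ▸ ht')
    apply h3 t' (List.mem_cons_of_mem a ht') ?_ hrefs'
    rw [List.idxOf_cons_ne L (Ne.symm ht'a), List.idxOf_cons_ne L (Ne.symm hta)]
    exact Nat.succ_lt_succ hidx
  · rintro ⟨ht, href, h3⟩
    have hta : t ≠ a := fun h => ha (h ▸ ht)
    refine ⟨List.mem_cons_of_mem a ht, href, ?_⟩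
    intro t' ht' hidx hrefs'
    have ht'a : t' ≠ a := by rintro rfl; exact hna hrefs'
    have ht'L : t' ∈ L := (List.mem_cons.mp ht').resolve_left ht'a
    apply h3 t' ht'L ?_ hrefs'
    rw [List.idxOf_cons_ne L (Ne.symm ht'a), List.idxOf_cons_ne L (Ne.symm hta)] at hidx
    exact Nat.lt_of_succ_lt_succ hidx

lemma Pc_cons_write (hRW : ∀ t : Tx, Disjoint (R t) (W t)) {a t : Tx} {L : List Tx}
    (ha : a ∉ L) (hW : oid ∈ W a) :
    Pc R W oid (a :: L) t ↔ t = a := by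
  constructor
  · rintro ⟨ht, href, h3⟩
    by_contra hne
    have htL : t ∈ L := (List.mem_cons.mp ht).resolve_left hne
    have hidx : (a :: L).idxOf a < (a :: L).idxOf t := by
      rw [List.idxOf_cons_self, List.idxOf_cons_ne L (Ne.symm hne)]
      exact Nat.succ_pos _
    have := h3 a (List.mem_cons_self) hidx (Finset.mem_union_right _ hW)
    exact Finset.disjoint_left.mp (hRW a) this.1 hW
  · rintro rfl
    refine ⟨List.mem_cons_self, Finset.mem_union_right _ hW, ?_⟩
    intro t' ht' hidx _
    rw [List.idxOf_cons_self] at hidx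
    exact absurd hidx (Nat.not_lt_zero _)

lemma Pc_cons_read {a t : Tx} {L : List Tx} (ha : a ∉ L) (hR : oid ∈ R a) :
    Pc R W oid (a :: L) t ↔ (t = a ∨ (Pc R W oid L t ∧ oid ∈ R t)) := by
  constructor
  · rintro ⟨ht, href, h3⟩
    rcases List.mem_cons.mp ht with rfl | htL
    · exact Or.inl rfl
    right
    have hne : t ≠ a := fun h => ha (h ▸ htL)
    have hidxa : (a :: L).idxOf a < (a :: L).idxOf t := by
      rw [List.idxOf_cons_self, List.idxOf_cons_ne L (Ne.symm hne)]
      exact Nat.succ_pos _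
    have hRt : oid ∈ R t :=
      (h3 a (List.mem_cons_self) hidxa (Finset.mem_union_left _ hR)).2
    refine ⟨⟨htL, href, ?_⟩, hRt⟩
    intro t' ht' hidx hrefs'
    have ht'a : t' ≠ a := fun h => ha (h ▸ ht')
    apply h3 t' (List.mem_cons_of_mem a ht') ?_ hrefs'
    rw [List.idxOf_cons_ne L (Ne.symm ht'a), List.idxOf_cons_ne L (Ne.symm hne)]
    exact Nat.succ_lt_succ hidx
  · rintro (rfl | ⟨⟨htL, href, h3⟩, hRt⟩)
    · refine ⟨List.mem_cons_self, Finset.mem_union_left _ hR, ?_⟩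
      intro t' ht' hidx _
      rw [List.idxOf_cons_self] at hidx
      exact absurd hidx (Nat.not_lt_zero _)
    · have hne : t ≠ a := fun h => ha (h ▸ htL)
      refine ⟨List.mem_cons_of_mem a htL, href, ?_⟩
      intro t' ht' hidx hrefs'
      rcases List.mem_cons.mp ht' with rfl | ht'L
      · exact ⟨hR, hRt⟩
      · have ht'a : t' ≠ a := fun h => ha (h ▸ ht'L)
        apply h3 t' ht'L ?_ hrefs'
        rw [List.idxOf_cons_ne L (Ne.symm ht'a), List.idxOf_cons_ne L (Ne.symm hne)] at hidx
        exact Nat.lt_of_succ_lt_succ hidx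

lemma mem_takeWhile_iff (hRW : ∀ t : Tx, Disjoint (R t) (W t)) (L : List Tx) (t : Tx) :
    t ∈ (L.filter (fun x => decide (oid ∈ R x ∪ W x))).takeWhile
        (fun x => decide (oid ∈ R x)) ↔
      ((∃ e, (pendingQueue R W oid L).head? = some e ∧ t ∈ e.2) ∧ oid ∈ R t) := by
  rw [pendingQueue_head hRW]
  rcases hF : L.filter (fun x => decide (oid ∈ R x ∪ W x)) with _ | ⟨a, rest⟩
  · simp
  · have ha : a ∈ L.filter (fun x => decide (oid ∈ R x ∪ W x)) :=
      hF ▸ List.mem_cons_self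
    have hrefs : oid ∈ R a ∪ W a := of_decide_eq_true (List.mem_filter.mp ha).2
    by_cases hW : oid ∈ W a
    · have hnR : oid ∉ R a := fun h => Finset.disjoint_left.mp (hRW a) h hW
      simp only [List.takeWhile_cons, hnR, decide_false, Bool.false_eq_true, if_false,
        if_pos hW, List.not_mem_nil, false_iff, Option.some.injEq]
      rintro ⟨⟨e, he, hte⟩, hRt⟩
      obtain rfl := he
      obtain rfl : t = a := List.mem_singleton.mp hte
      exact hnR hRt
    · have hR : oid ∈ R a := (Finset.mem_union.mp hrefs).resolve_right hW
      simp only [List.takeWhile_cons, hR, decide_true, if_true, if_neg hW,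
        List.mem_cons, Option.some.injEq]
      constructor
      · rintro (rfl | htw)
        · exact ⟨⟨_, rfl, List.mem_cons_self⟩, hR⟩
        · refine ⟨⟨_, rfl, List.mem_cons_of_mem _ htw⟩,
            of_decide_eq_true
              (List.mem_takeWhile_imp (p := fun x => decide (oid ∈ R x)) htw)⟩
      · rintro ⟨⟨e, he, hte⟩, hRt⟩
        obtain rfl := he
        exact List.mem_cons.mp hte

end Main

/-- **Characterization of the head of a pending queue.** A transaction `t` belongs to the
transaction list of the first entry of the pending queue for `oid` built from `L` iff `t`
occurs in `L`, `t` references `oid`, and every transaction occurring in `L` strictly before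
`t` that references `oid` only reads it — and `t` itself only reads `oid`. -/
theorem pending_queue_head_iff {Tx Obj : Type} [DecidableEq Tx] [DecidableEq Obj]
    (R W : Tx → Finset Obj) (hRW : ∀ t : Tx, Disjoint (R t) (W t))
    (L : List Tx) (hL : L.Nodup) (oid : Obj) (t : Tx) :
    (∃ e, (pendingQueue R W oid L).head? = some e ∧ t ∈ e.2) ↔
      (t ∈ L ∧ oid ∈ R t ∪ W t ∧
        ∀ t' ∈ L, L.idxOf t' < L.idxOf t → oid ∈ R t' ∪ W t' →
          oid ∈ R t' ∧ oid ∈ R t) := by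
  suffices h : ∀ L : List Tx, L.Nodup →
      ((∃ e, (pendingQueue R W oid L).head? = some e ∧ t ∈ e.2) ↔ Pc R W oid L t) from
    h L hL
  intro L
  induction L with
  | nil => intro _; simp [pendingQueue, Pc]
  | cons a L ih =>
    intro hnd
    have ha : a ∉ L := (List.nodup_cons.mp hnd).1
    have hL' : L.Nodup := (List.nodup_cons.mp hnd).2
    by_cases hW : oid ∈ W a
    · have hfil : (a :: L).filter (fun x => decide (oid ∈ R x ∪ W x)) =
          a :: L.filter (fun x => decide (oid ∈ R x ∪ W x)) := by
        simp [List.filter_cons, Finset.mem_union, hW]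
      have hhead : (pendingQueue R W oid (a :: L)).head? = some (Tag.write, [a]) := by
        rw [pendingQueue_head hRW, hfil]; simp [hW]
      rw [hhead, Pc_cons_write hRW ha hW]
      simp
    · by_cases hR : oid ∈ R a
      · have hfil : (a :: L).filter (fun x => decide (oid ∈ R x ∪ W x)) =
            a :: L.filter (fun x => decide (oid ∈ R x ∪ W x)) := by
          simp [List.filter_cons, Finset.mem_union, hR]
        have hhead : (pendingQueue R W oid (a :: L)).head? =
            some (Tag.read, a :: (L.filter (fun x => decide (oid ∈ R x ∪ W x))).takeWhile
              (fun x => decide (oid ∈ R x))) := by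
          rw [pendingQueue_head hRW, hfil]; simp [hW]
        rw [hhead, Pc_cons_read ha hR]
        have hmem : (∃ e, some (Tag.read,
            a :: (L.filter (fun x => decide (oid ∈ R x ∪ W x))).takeWhile
              (fun x => decide (oid ∈ R x))) = some e ∧ t ∈ e.2) ↔
            t ∈ a :: (L.filter (fun x => decide (oid ∈ R x ∪ W x))).takeWhile
              (fun x => decide (oid ∈ R x)) := by
          simp
        rw [hmem, List.mem_cons]
        refine or_congr Iff.rfl ?_
        rw [mem_takeWhile_iff hRW L t, ih hL']
      · have hna : oid ∉ R a ∪ W a := by simp [Finset.mem_union, hW, hR]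
        have hq : pendingQueue R W oid (a :: L) = pendingQueue R W oid L := by
          unfold pendingQueue; rw [List.foldl_cons, pendingStep_skip hW hR]
        rw [hq, Pc_cons_nonref ha hna]
        exact ih hL'
end

section
/- (The first pending transaction is always executable; the queue-based scheduler cannot deadlock.) Let L be a nonempty list of pairwise distinct transactions with head t₀. Then for every object oid referenced by t₀, the pending queue for oid built from L is nonempty and t₀ belongs to the transaction list of its first entry. -/
lemma pendingStep_head {Tx Obj : Type} [DecidableEq Obj] (R W : Tx → Finset Obj) (oid : Obj)
    (a : Tag × List Tx) (l : List (Tag × List Tx)) (t : Tx) :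
    ∃ b l', pendingStep R W oid (a :: l) t = b :: l' ∧ ∀ x ∈ a.2, x ∈ b.2 := by
  unfold pendingStep
  split
  · exact ⟨a, l ++ [(Tag.write, [t])], by simp, fun x hx => hx⟩
  split
  · cases l with
    | nil =>
      simp only [List.getLast?_singleton]
      obtain ⟨tag, ts⟩ := a
      cases tag with
      | read =>
        exact ⟨(Tag.read, ts ++ [t]), [], by simp, fun x hx => by simp [hx]⟩
      | write =>
        exact ⟨(Tag.write, ts), [(Tag.read, [t])], by simp, fun x hx => hx⟩
    | cons c cs =>
      have hgl : (a :: c :: cs).getLast? = (c :: cs).getLast? := by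
        simp [List.getLast?_cons_cons]
      rw [hgl]
      match h : (c :: cs).getLast? with
      | some (Tag.read, ts) =>
        refine ⟨a, (c :: cs).dropLast ++ [(Tag.read, ts ++ [t])], by simp [List.dropLast], fun x hx => hx⟩
      | some (Tag.write, ts) =>
        exact ⟨a, (c :: cs) ++ [(Tag.read, [t])], by simp, fun x hx => hx⟩
      | none =>
        simp at h
  · exact ⟨a, l, rfl, fun x hx => hx⟩

lemma pendingFoldl_head {Tx Obj : Type} [DecidableEq Obj] (R W : Tx → Finset Obj) (oid : Obj)
    (t₀ : Tx) :
    ∀ (L : List Tx) (a : Tag × List Tx) (l : List (Tag × List Tx)), t₀ ∈ a.2 →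
    ∃ b l', List.foldl (pendingStep R W oid) (a :: l) L = b :: l' ∧ t₀ ∈ b.2 := by
  intro L
  induction L with
  | nil => exact fun a l h => ⟨a, l, rfl, h⟩
  | cons t L ih =>
    intro a l h
    obtain ⟨b, l', heq, hsub⟩ := pendingStep_head R W oid a l t
    simp only [List.foldl_cons, heq]
    exact ih b l' (hsub _ h)

/-- **The first pending transaction is always executable.** If `t₀` is the head of a
nonempty list `L` of pairwise distinct transactions, then for every object `oid` that `t₀`
references, the pending queue for `oid` built from `L` is nonempty and `t₀` belongs to the
transaction list of its first entry. -/
theorem head_transaction_executable {Tx Obj : Type} [DecidableEq Obj]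
    (R W : Tx → Finset Obj) (hRW : ∀ t : Tx, Disjoint (R t) (W t))
    (L : List Tx) (hL : L.Nodup)
    (t₀ : Tx) (hhead : L.head? = some t₀)
    (oid : Obj) (href : oid ∈ R t₀ ∪ W t₀) :
    pendingQueue R W oid L ≠ [] ∧
      ∃ e, (pendingQueue R W oid L).head? = some e ∧ t₀ ∈ e.2 := by
  cases L with
  | nil => simp at hhead
  | cons t L' =>
    obtain rfl : t = t₀ := by simpa using hhead
    have h1 : ∃ e : Tag × List Tx, pendingStep R W oid [] t = [e] ∧ t ∈ e.2 := by
      rcases Finset.mem_union.1 href with hr | hw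
      · have hnw : oid ∉ W t := Finset.disjoint_left.1 (hRW t) hr
        exact ⟨(Tag.read, [t]), by simp [pendingStep, hnw, hr], by simp⟩
      · exact ⟨(Tag.write, [t]), by simp [pendingStep, hw], by simp⟩
    obtain ⟨e, he, hm⟩ := h1
    have : pendingQueue R W oid (t :: L') = List.foldl (pendingStep R W oid) [e] L' := by
      simp [pendingQueue, he]
    obtain ⟨b, l', heq, hb⟩ := pendingFoldl_head R W oid t L' e [] hm
    rw [this, heq]
    exact ⟨by simp, b, rfl, hb⟩
end

section
/- (Advancing the locks after executing the head transaction.) Let L be a nonempty list of pairwise distinct transactions with head t₀. For every object oid, the queue obtained from the pending queue for oid built from L by deleting every occurrence of t₀ from the transaction lists of its entries and then deleting every entry whose transaction list has become empty is exactly the pending queue for oid built from the tail L.tail. -/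
namespace AdvanceLocksAux

variable {Tx Obj : Type} [DecidableEq Tx] [DecidableEq Obj]
  (R W : Tx → Finset Obj) (oid : Obj)

lemma mem_of_getLast?_eq {α : Type*} {l : List α} {a : α} (h : l.getLast? = some a) : a ∈ l := by
  obtain ⟨h', rfl⟩ := List.mem_getLast?_eq_getLast (l := l) h
  exact List.getLast_mem h'

/-- Stepping a queue with at least two elements, or more generally a cons of a nonempty
queue, distributes over the cons. -/
lemma step_cons (a : Tag × List Tx) (q : List (Tag × List Tx)) (hq : q ≠ []) (t : Tx) :
    pendingStep R W oid (a :: q) t = a :: pendingStep R W oid q t := by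
  cases q with
  | nil => exact absurd rfl hq
  | cons b q' =>
    unfold pendingStep
    split_ifs with h1 h2
    · simp
    · rw [List.getLast?_cons_cons]
      rcases hg : (b :: q').getLast? with _ | ⟨tag, ts⟩
      · simp at hg
      · cases tag
        · show (a :: b :: q').dropLast ++ _ = a :: ((b :: q').dropLast ++ _)
          rfl
        · simp
    · rfl

lemma step_write_cons (l : List Tx) (q : List (Tag × List Tx)) (t : Tx) :
    pendingStep R W oid ((Tag.write, l) :: q) t =
      (Tag.write, l) :: pendingStep R W oid q t := by
  cases q with
  | nil =>
    unfold pendingStep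
    split_ifs with h1 h2 <;> rfl
  | cons b q' => exact step_cons R W oid _ _ (by simp) t

lemma foldl_write_cons (M : List Tx) : ∀ (l : List Tx) (q : List (Tag × List Tx)),
    M.foldl (pendingStep R W oid) ((Tag.write, l) :: q) =
      (Tag.write, l) :: M.foldl (pendingStep R W oid) q := by
  induction M with
  | nil => intro l q; rfl
  | cons t M ih =>
    intro l q
    simp only [List.foldl_cons, step_write_cons, ih]

/-- All entries of a fold have nonempty transaction lists whose elements satisfy `p`,
provided the initial queue does and all elements of `M` satisfy `p`. -/
lemma foldl_pred (p : Tx → Prop) : ∀ (M : List Tx) (q : List (Tag × List Tx)),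
    (∀ t ∈ M, p t) → (∀ e ∈ q, e.2 ≠ [] ∧ ∀ x ∈ e.2, p x) →
    ∀ e ∈ M.foldl (pendingStep R W oid) q, e.2 ≠ [] ∧ ∀ x ∈ e.2, p x := by
  intro M
  induction M with
  | nil => intro q _ hq; exact hq
  | cons t M ih =>
    intro q hM hq
    refine ih _ (fun x hx => hM x (List.mem_cons_of_mem _ hx)) ?_
    have hpt : p t := hM t List.mem_cons_self
    intro e he
    unfold pendingStep at he
    split_ifs at he with h1 h2
    · rcases List.mem_append.1 he with h | h
      · exact hq e h
      · simp at h
        subst h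
        exact ⟨by simp, by simpa using hpt⟩
    · rcases hg : q.getLast? with _ | ⟨tag, ts⟩ <;> rw [hg] at he
      · rcases List.mem_append.1 he with h | h
        · exact hq e h
        · simp at h; subst h
          exact ⟨by simp, by simpa using hpt⟩
      · cases tag with
        | read =>
          rcases List.mem_append.1 he with h | h
          · exact hq e (List.dropLast_subset q h)
          · simp at h; subst h
            have hts := hq _ (mem_of_getLast?_eq hg)
            refine ⟨by simp, ?_⟩
            intro x hx
            rcases List.mem_append.1 hx with h | h
            · exact hts.2 x h
            · simp at h; subst h; exact hpt
        | write =>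
          rcases List.mem_append.1 he with h | h
          · exact hq e h
          · simp at h; subst h
            exact ⟨by simp, by simpa using hpt⟩
    · exact hq e he

/-- The cleaning operation: delete `t₀` from each entry, drop empty entries. -/
def clean (t₀ : Tx) (q : List (Tag × List Tx)) : List (Tag × List Tx) :=
  (q.map (fun e => (e.1, e.2.filter (fun x => decide (x ≠ t₀))))).filter
    (fun e => decide (e.2 ≠ []))

lemma clean_eq_self (t₀ : Tx) (q : List (Tag × List Tx))
    (hq : ∀ e ∈ q, e.2 ≠ [] ∧ ∀ x ∈ e.2, x ≠ t₀) : clean t₀ q = q := by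
  induction q with
  | nil => rfl
  | cons e q ih =>
    have he := hq e List.mem_cons_self
    have hfe : e.2.filter (fun x => decide (x ≠ t₀)) = e.2 :=
      List.filter_eq_self.2 (fun a ha => by simpa using he.2 a ha)
    unfold clean
    simp only [List.map_cons, List.filter_cons, hfe]
    rw [if_pos (by simpa using he.1)]
    congr 1
    exact ih (fun e' he' => hq e' (List.mem_cons_of_mem _ he'))

/-- The relation between a queue built starting from `[(read,[t₀])]` and one built from `[]`. -/
def Rel (t₀ : Tx) (q₁ q₂ : List (Tag × List Tx)) : Prop :=
  (q₁ = (Tag.read, [t₀]) :: q₂ ∧ (q₂ = [] ∨ ∃ l q', q₂ = (Tag.write, l) :: q')) ∨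
  (∃ s q', q₂ = (Tag.read, s) :: q' ∧ q₁ = (Tag.read, t₀ :: s) :: q')

lemma rel_step (t₀ : Tx) (q₁ q₂ : List (Tag × List Tx)) (t : Tx) (h : Rel t₀ q₁ q₂) :
    Rel t₀ (pendingStep R W oid q₁ t) (pendingStep R W oid q₂ t) := by
  rcases h with ⟨rfl, h2⟩ | ⟨s, q', rfl, rfl⟩
  · rcases h2 with rfl | ⟨l, q', rfl⟩
    · -- q₂ = [], q₁ = [(read,[t₀])]
      unfold pendingStep
      split_ifs with h1 h2
      · exact Or.inl ⟨rfl, Or.inr ⟨[t], [], rfl⟩⟩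
      · exact Or.inr ⟨[t], [], rfl, rfl⟩
      · exact Or.inl ⟨rfl, Or.inl rfl⟩
    · -- q₂ = (write,l) :: q'
      rw [step_cons R W oid _ _ (by simp) t, step_write_cons]
      exact Or.inl ⟨rfl, Or.inr ⟨l, _, rfl⟩⟩
  · -- q₂ = (read,s) :: q', q₁ = (read, t₀::s) :: q'
    cases q' with
    | nil =>
      unfold pendingStep
      split_ifs with h1 h2
      · exact Or.inr ⟨s, _, rfl, rfl⟩
      · exact Or.inr ⟨s ++ [t], [], rfl, rfl⟩
      · exact Or.inr ⟨s, [], rfl, rfl⟩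
    | cons a q'' =>
      rw [step_cons R W oid (Tag.read, t₀ :: s) (a :: q'') (by simp) t,
        step_cons R W oid (Tag.read, s) (a :: q'') (by simp) t]
      exact Or.inr ⟨s, _, rfl, rfl⟩

lemma step_nil (t : Tx) : pendingStep R W oid [] t =
    if oid ∈ W t then [(Tag.write, [t])]
    else if oid ∈ R t then [(Tag.read, [t])] else [] := rfl

lemma rel_foldl (t₀ : Tx) : ∀ (M : List Tx) (q₁ q₂ : List (Tag × List Tx)), Rel t₀ q₁ q₂ →
    Rel t₀ (M.foldl (pendingStep R W oid) q₁) (M.foldl (pendingStep R W oid) q₂) := by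
  intro M
  induction M with
  | nil => intro q₁ q₂ h; exact h
  | cons t M ih => intro q₁ q₂ h; exact ih _ _ (rel_step R W oid t₀ _ _ t h)

end AdvanceLocksAux

/-- **Advancing the locks after executing the head transaction.** Deleting every occurrence
of the head transaction `t₀` from the transaction lists of the entries of the pending queue
for `oid` built from `L`, and then deleting the entries whose transaction list became empty,
yields exactly the pending queue for `oid` built from `L.tail`. -/
theorem advance_locks {Tx Obj : Type} [DecidableEq Tx] [DecidableEq Obj]
    (R W : Tx → Finset Obj) (hRW : ∀ t : Tx, Disjoint (R t) (W t))
    (L : List Tx) (hL : L.Nodup)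
    (t₀ : Tx) (hhead : L.head? = some t₀) (oid : Obj) :
    (((pendingQueue R W oid L).map
        (fun e => (e.1, e.2.filter (fun x => decide (x ≠ t₀))))).filter
      (fun e => decide (e.2 ≠ []))) = pendingQueue R W oid L.tail := by
  cases L with
  | nil => simp at hhead
  | cons t M =>
    obtain rfl : t₀ = t := by simpa using hhead.symm
    have ht₀M : t₀ ∉ M := (List.nodup_cons.1 hL).1
    have hMne : ∀ x ∈ M, x ≠ t₀ := fun x hx h => ht₀M (h ▸ hx)
    have hpred := AdvanceLocksAux.foldl_pred R W oid (fun x => x ≠ t₀) M [] hMne (by simp)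
    have hq2 : AdvanceLocksAux.clean t₀ (M.foldl (pendingStep R W oid) []) =
        M.foldl (pendingStep R W oid) [] :=
      AdvanceLocksAux.clean_eq_self t₀ _ hpred
    show AdvanceLocksAux.clean t₀ (M.foldl (pendingStep R W oid) (pendingStep R W oid [] t₀)) =
        M.foldl (pendingStep R W oid) []
    rw [AdvanceLocksAux.step_nil]
    split_ifs with h1 h2
    · -- t₀ writes oid : initial queue [(write,[t₀])]
      rw [show ([(Tag.write, [t₀])] : List (Tag × List Tx)) = (Tag.write, [t₀]) :: [] from rfl,
        AdvanceLocksAux.foldl_write_cons]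
      unfold AdvanceLocksAux.clean
      simp only [List.map_cons, List.filter_cons]
      rw [if_neg (by simp)]
      exact hq2
    · -- t₀ reads oid : initial queue [(read,[t₀])]
      have hrel := AdvanceLocksAux.rel_foldl R W oid t₀ M [(Tag.read, [t₀])] []
        (Or.inl ⟨rfl, Or.inl rfl⟩)
      rcases hrel with ⟨heq, _⟩ | ⟨s, q', heq2, heq1⟩
      · rw [heq]
        unfold AdvanceLocksAux.clean
        simp only [List.map_cons, List.filter_cons]
        rw [if_neg (by simp)]
        exact hq2
      · rw [heq1, heq2]
        rw [heq2] at hpred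
        have hs := hpred _ List.mem_cons_self
        have hq' : AdvanceLocksAux.clean t₀ q' = q' :=
          AdvanceLocksAux.clean_eq_self t₀ q'
            (fun e he => hpred e (List.mem_cons_of_mem _ he))
        unfold AdvanceLocksAux.clean
        simp only [List.map_cons, List.filter_cons]
        have hfs : s.filter (fun x => decide (x ≠ t₀)) = s :=
          List.filter_eq_self.2 (fun a ha => by simpa using hs.2 a ha)
        rw [if_neg (show ¬(decide (t₀ ≠ t₀) = true) by simp), hfs]
        rw [if_pos (by simpa using hs.1)]
        congr 1
    · -- t₀ does not reference oid : initial queue []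
      exact hq2
end

section
/- (Correctness of versioned-queue scheduling.) Let L : List (Fin n) be a permutation of all transactions such that for all i j with D i j, i occurs in L strictly before j, and let τ be the fold of execV over L starting from τ₀. Then for every object oid: τ oid 0 = some (σ₀ oid), and for every transaction t with oid ∈ W t, τ oid (vIn t oid + 1) = some (σ_{t+1} oid), where σ_k denotes the (flat) sequential execution of the transactions with index < k in increasing index order from σ₀. In particular, for every oid the value stored at its highest version equals σ_n oid, the object's value after sequential execution of all transactions. -/
/-- `vIn W t oid` is the number of transactions `i` with `i < t` and `oid ∈ W i`:
the version of `oid` read by transaction `t`. -/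
def vIn {n : ℕ} {Obj : Type*} [DecidableEq Obj] (W : Fin n → Finset Obj)
    (t : Fin n) (oid : Obj) : ℕ :=
  (Finset.univ.filter (fun i : Fin n => i < t ∧ oid ∈ W i)).card

/-- `vMax W oid` is the total number of transactions writing `oid`: its highest version. -/
def vMax {n : ℕ} {Obj : Type*} [DecidableEq Obj] (W : Fin n → Finset Obj) (oid : Obj) : ℕ :=
  (Finset.univ.filter (fun i : Fin n => oid ∈ W i)).card

/-- The initial versioned store: version 0 of each object holds its initial value,
all later versions are absent. -/
def tau0 {Obj V : Type*} (σ₀ : Obj → V) : Obj → ℕ → Option V :=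
  fun oid v => if v = 0 then some (σ₀ oid) else none

/-- The flat state read by transaction `t` from the versioned store `τ`. -/
def readState {n : ℕ} {Obj V : Type*} [DecidableEq Obj] [Inhabited V]
    (W : Fin n → Finset Obj) (τ : Obj → ℕ → Option V) (t : Fin n) : Obj → V :=
  fun oid => (τ oid (vIn W t oid)).getD default

/-- Versioned execution of transaction `t` on the versioned store `τ`. -/
def execV {n : ℕ} {Obj V : Type*} [DecidableEq Obj] [Inhabited V]
    (W : Fin n → Finset Obj) (exec : Fin n → (Obj → V) → (Obj → V))
    (t : Fin n) (τ : Obj → ℕ → Option V) : Obj → ℕ → Option V :=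
  fun oid v =>
    if oid ∈ W t ∧ v = vIn W t oid + 1 then some (exec t (readState W τ t) oid)
    else τ oid v

/-- The versioned dependency relation: `D i j` holds when `i` is the last writer, before
`j`, of some object that `j` references. -/
def VDep {n : ℕ} {Obj : Type*} [DecidableEq Obj] (R W : Fin n → Finset Obj)
    (i j : Fin n) : Prop :=
  i < j ∧ ∃ oid : Obj, oid ∈ W i ∧ oid ∈ R j ∪ W j ∧
    ∀ k : Fin n, i < k → k < j → oid ∉ W k

/-- `seqState exec σ₀ k` is the flat sequential execution, from `σ₀`, of the transactions
with index `< k` in increasing index order. -/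
def seqState {n : ℕ} {Obj V : Type*} (exec : Fin n → (Obj → V) → (Obj → V))
    (σ₀ : Obj → V) (k : ℕ) : Obj → V :=
  ((List.finRange n).take k).foldl (fun σ t => exec t σ) σ₀

section AuxVQ

open Finset

variable {n : ℕ} {Obj V : Type*} [DecidableEq Obj] [Inhabited V]

lemma seqState_succ (exec : Fin n → (Obj → V) → (Obj → V)) (σ₀ : Obj → V)
    (b : ℕ) (hb : b < n) :
    seqState exec σ₀ (b + 1) = exec ⟨b, hb⟩ (seqState exec σ₀ b) := by
  unfold seqState
  rw [List.take_succ, List.foldl_append]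
  have h : (List.finRange n)[b]? = some ⟨b, hb⟩ := by
    rw [List.getElem?_eq_getElem (by simpa using hb)]
    simp
  rw [h]
  rfl

lemma seqState_nowrite (W : Fin n → Finset Obj)
    (exec : Fin n → (Obj → V) → (Obj → V))
    (hmod : ∀ (t : Fin n) (σ : Obj → V) (oid : Obj), oid ∉ W t → exec t σ oid = σ oid)
    (σ₀ : Obj → V) (oid : Obj) (a : ℕ) :
    ∀ b : ℕ, a ≤ b → (∀ k : Fin n, a ≤ k.val → k.val < b → oid ∉ W k) →
      seqState exec σ₀ b oid = seqState exec σ₀ a oid := by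
  intro b
  induction b with
  | zero => intro hab _; have h0 : a = 0 := Nat.le_zero.mp hab; rw [h0]
  | succ b ih =>
    intro hab hnw
    rcases Nat.eq_or_lt_of_le hab with h | h
    · rw [h]
    · have hab' : a ≤ b := by omega
      by_cases hb : b < n
      · rw [seqState_succ exec σ₀ b hb,
          hmod ⟨b, hb⟩ _ oid (hnw ⟨b, hb⟩ (by simp only [Fin.val_mk]; omega) (by simp only [Fin.val_mk]; omega))]
        exact ih hab' (fun k hk1 hk2 => hnw k hk1 (by omega))
      · have : seqState exec σ₀ (b + 1) = seqState exec σ₀ b := by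
          unfold seqState
          rw [List.take_of_length_le (by simpa using by omega : (List.finRange n).length ≤ b),
            List.take_of_length_le (by simpa using by omega : (List.finRange n).length ≤ b + 1)]
        rw [this]
        exact ih hab' (fun k hk1 hk2 => hnw k hk1 (by omega))

lemma vIn_lt_vIn (W : Fin n → Finset Obj) {oid : Obj} {i t : Fin n}
    (hit : i < t) (hi : oid ∈ W i) : vIn W i oid < vIn W t oid := by
  apply Finset.card_lt_card
  rw [Finset.ssubset_def]
  constructor
  · intro j hj
    simp only [mem_filter, mem_univ, true_and] at hj ⊢
    exact ⟨hj.1.trans hit, hj.2⟩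
  · intro hsub
    have := hsub (by simp [hit, hi] : i ∈ univ.filter (fun j : Fin n => j < t ∧ oid ∈ W j))
    simp at this

lemma vIn_last (W : Fin n → Finset Obj) {oid : Obj} {i t : Fin n}
    (hit : i < t) (hi : oid ∈ W i)
    (hlast : ∀ k : Fin n, i < k → k < t → oid ∉ W k) :
    vIn W t oid = vIn W i oid + 1 := by
  unfold vIn
  have h : univ.filter (fun j : Fin n => j < t ∧ oid ∈ W j)
      = insert i (univ.filter (fun j : Fin n => j < i ∧ oid ∈ W j)) := by
    ext j
    simp only [Finset.mem_insert, mem_filter, mem_univ, true_and]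
    constructor
    · rintro ⟨hjt, hj⟩
      rcases lt_trichotomy j i with h | h | h
      · exact Or.inr ⟨h, hj⟩
      · exact Or.inl h
      · exact absurd hj (hlast j h hjt)
    · rintro (rfl | ⟨hji, hj⟩)
      · exact ⟨hit, hi⟩
      · exact ⟨hji.trans hit, hj⟩
  rw [h, Finset.card_insert_of_notMem (by simp)]

lemma vIn_zero (W : Fin n → Finset Obj) {oid : Obj} {t : Fin n}
    (h : ∀ i : Fin n, i < t → oid ∉ W i) : vIn W t oid = 0 := by
  unfold vIn
  rw [Finset.card_eq_zero]
  ext j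
  simp only [mem_filter, mem_univ, true_and, Finset.notMem_empty, iff_false, not_and]
  exact fun hj => h j hj

lemma vMax_last (W : Fin n → Finset Obj) {oid : Obj} {t : Fin n}
    (ht : oid ∈ W t) (hlast : ∀ k : Fin n, t < k → oid ∉ W k) :
    vMax W oid = vIn W t oid + 1 := by
  unfold vMax vIn
  have h : univ.filter (fun j : Fin n => oid ∈ W j)
      = insert t (univ.filter (fun j : Fin n => j < t ∧ oid ∈ W j)) := by
    ext j
    simp only [Finset.mem_insert, mem_filter, mem_univ, true_and]
    constructor
    · intro hj
      rcases lt_trichotomy j t with h | h | h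
      · exact Or.inr ⟨h, hj⟩
      · exact Or.inl h
      · exact absurd hj (hlast j h)
    · rintro (rfl | ⟨_, hj⟩)
      · exact ht
      · exact hj
  rw [h, Finset.card_insert_of_notMem (by simp)]

lemma vMax_zero (W : Fin n → Finset Obj) {oid : Obj}
    (h : ∀ i : Fin n, oid ∉ W i) : vMax W oid = 0 := by
  unfold vMax
  rw [Finset.card_eq_zero]
  ext j
  simp [h j]

/-- The invariant maintained by versioned execution over a processed set `S`. -/
def InvVQ (W : Fin n → Finset Obj) (exec : Fin n → (Obj → V) → (Obj → V))
    (σ₀ : Obj → V) (τ : Obj → ℕ → Option V) (S : Finset (Fin n)) : Prop :=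
  ∀ oid : Obj, τ oid 0 = some (σ₀ oid) ∧
    ∀ t : Fin n, oid ∈ W t → τ oid (vIn W t oid + 1) =
      if t ∈ S then some (seqState exec σ₀ (t.val + 1) oid) else none

lemma step_inv (R W : Fin n → Finset Obj)
    (exec : Fin n → (Obj → V) → (Obj → V))
    (hmod : ∀ (t : Fin n) (σ : Obj → V) (oid : Obj), oid ∉ W t → exec t σ oid = σ oid)
    (hdet : ∀ (t : Fin n) (σ σ' : Obj → V),
      (∀ oid ∈ R t ∪ W t, σ oid = σ' oid) → ∀ oid ∈ W t, exec t σ oid = exec t σ' oid)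
    (σ₀ : Obj → V) {τ : Obj → ℕ → Option V} {S : Finset (Fin n)} {t : Fin n}
    (hInv : InvVQ W exec σ₀ τ S) (htS : t ∉ S)
    (hpred : ∀ i : Fin n, VDep R W i t → i ∈ S) :
    InvVQ W exec σ₀ (execV W exec t τ) (insert t S) := by
  have hread : ∀ oid ∈ R t ∪ W t, readState W τ t oid = seqState exec σ₀ t.val oid := by
    intro oid hoid
    by_cases hex : (univ.filter (fun i : Fin n => i < t ∧ oid ∈ W i)).Nonempty
    · set s := univ.filter (fun i : Fin n => i < t ∧ oid ∈ W i) with hs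
      set i := s.max' hex with hi
      have hmem : i ∈ s := s.max'_mem hex
      simp only [hs, mem_filter, mem_univ, true_and] at hmem
      have hmax : ∀ k : Fin n, i < k → k < t → oid ∉ W k := by
        intro k hik hkt hk
        have : k ≤ i := s.le_max' k (by simp [hs, hkt, hk])
        exact absurd hik (not_lt.mpr this)
      have hiS : i ∈ S := hpred i ⟨hmem.1, oid, hmem.2, hoid, hmax⟩
      have hv : vIn W t oid = vIn W i oid + 1 := vIn_last W hmem.1 hmem.2 hmax
      have hτ := ((hInv oid).2 i hmem.2)
      rw [if_pos hiS] at hτ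
      have hseq : seqState exec σ₀ t.val oid = seqState exec σ₀ (i.val + 1) oid := by
        apply seqState_nowrite W exec hmod σ₀ oid (i.val + 1) t.val
        · exact hmem.1
        · intro k hk1 hk2
          exact hmax k (by exact hk1) (by exact hk2)
      rw [hseq]
      unfold readState
      rw [hv, hτ]
      rfl
    · rw [Finset.not_nonempty_iff_eq_empty] at hex
      have hnw : ∀ i : Fin n, i < t → oid ∉ W i := by
        intro i hit hiW
        have : i ∈ univ.filter (fun i : Fin n => i < t ∧ oid ∈ W i) := by simp [hit, hiW]
        rw [hex] at this
        simp at this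
      have hv : vIn W t oid = 0 := vIn_zero W hnw
      have hseq : seqState exec σ₀ t.val oid = seqState exec σ₀ 0 oid := by
        apply seqState_nowrite W exec hmod σ₀ oid 0 t.val (Nat.zero_le _)
        intro k _ hk2
        exact hnw k hk2
      rw [hseq]
      unfold readState
      rw [hv, (hInv oid).1]
      rfl
  have hval : ∀ oid ∈ W t,
      exec t (readState W τ t) oid = seqState exec σ₀ (t.val + 1) oid := by
    intro oid ho
    rw [seqState_succ exec σ₀ t.val t.isLt]
    have h := hdet t (readState W τ t) (seqState exec σ₀ t.val) hread oid ho
    simpa using h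
  intro oid
  refine ⟨?_, ?_⟩
  · show execV W exec t τ oid 0 = some (σ₀ oid)
    unfold execV
    rw [if_neg (by rintro ⟨_, h⟩; omega)]
    exact (hInv oid).1
  · intro t' ht'
    by_cases h : t' = t
    · subst h
      show execV W exec t' τ oid _ = _
      unfold execV
      rw [if_pos ⟨ht', rfl⟩, if_pos (Finset.mem_insert_self t' S)]
      exact congrArg some (hval oid ht')
    · show execV W exec t τ oid _ = _
      unfold execV
      rw [if_neg ?_]
      · rw [(hInv oid).2 t' ht']
        simp [Finset.mem_insert, h]
      · rintro ⟨hWt, heq⟩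
        have heq' : vIn W t' oid = vIn W t oid := by omega
        rcases lt_trichotomy t' t with hlt | he | hgt
        · exact absurd (vIn_lt_vIn W hlt ht') (by omega)
        · exact h he
        · exact absurd (vIn_lt_vIn W hgt hWt) (by omega)

lemma fold_inv (R W : Fin n → Finset Obj)
    (exec : Fin n → (Obj → V) → (Obj → V))
    (hmod : ∀ (t : Fin n) (σ : Obj → V) (oid : Obj), oid ∉ W t → exec t σ oid = σ oid)
    (hdet : ∀ (t : Fin n) (σ σ' : Obj → V),
      (∀ oid ∈ R t ∪ W t, σ oid = σ' oid) → ∀ oid ∈ W t, exec t σ oid = exec t σ' oid)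
    (σ₀ : Obj → V) :
    ∀ (M : List (Fin n)) (S : Finset (Fin n)) (τ : Obj → ℕ → Option V),
      InvVQ W exec σ₀ τ S → M.Nodup → (∀ t ∈ M, t ∉ S) →
      (∀ t ∈ M, ∀ i : Fin n, VDep R W i t →
        i ∈ S ∨ (i ∈ M ∧ M.idxOf i < M.idxOf t)) →
      InvVQ W exec σ₀ (M.foldl (fun τ t => execV W exec t τ) τ) (S ∪ M.toFinset) := by
  intro M
  induction M with
  | nil => intro S τ h _ _ _; simpa using h
  | cons a M ih =>
    intro S τ hInv hnd hnotS hpred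
    have ha : ∀ i : Fin n, VDep R W i a → i ∈ S := by
      intro i hi
      rcases hpred a List.mem_cons_self i hi with h | ⟨him, hidx⟩
      · exact h
      · rw [List.idxOf_cons_self] at hidx
        omega
    have hstep := step_inv R W exec hmod hdet σ₀ hInv (hnotS a List.mem_cons_self) ha
    have hres := ih (insert a S) (execV W exec a τ) hstep (List.nodup_cons.mp hnd).2 ?_ ?_
    · have heq : insert a S ∪ M.toFinset = S ∪ (a :: M).toFinset := by
        simp [Finset.insert_union, Finset.union_insert]
      rw [heq] at hres
      simpa using hres
    · intro t htM
      simp only [Finset.mem_insert, not_or]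
      exact ⟨fun h => (List.nodup_cons.mp hnd).1 (h ▸ htM),
        hnotS t (List.mem_cons_of_mem a htM)⟩
    · intro t htM i hi
      rcases hpred t (List.mem_cons_of_mem a htM) i hi with h | ⟨him, hidx⟩
      · exact Or.inl (Finset.mem_insert_of_mem h)
      · rcases List.mem_cons.mp him with rfl | him'
        · exact Or.inl (Finset.mem_insert_self i S)
        · refine Or.inr ⟨him', ?_⟩
          have hta : a ≠ t := fun h => (List.nodup_cons.mp hnd).1 (h ▸ htM)
          have hia : a ≠ i := fun h => (List.nodup_cons.mp hnd).1 (h ▸ him')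
          rw [List.idxOf_cons_ne M hia, List.idxOf_cons_ne M hta] at hidx
          omega

end AuxVQ


/-- **Correctness of versioned-queue scheduling.** If `L` is a permutation of all
transactions respecting the versioned dependency relation, then folding `execV` over `L`
from the initial versioned store produces, at version 0, the initial value of each object;
at version `vIn t oid + 1` (for each writer `t` of `oid`), the value of `oid` after the
sequential execution of the first `t+1` transactions; and at the highest version of each
object, its value after sequential execution of all transactions. -/
theorem versioned_queue_correct {n : ℕ} {Obj V : Type*} [DecidableEq Obj] [Inhabited V]
    (R W : Fin n → Finset Obj) (hRW : ∀ t : Fin n, Disjoint (R t) (W t))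
    (exec : Fin n → (Obj → V) → (Obj → V))
    (hmod : ∀ (t : Fin n) (σ : Obj → V) (oid : Obj), oid ∉ W t → exec t σ oid = σ oid)
    (hdet : ∀ (t : Fin n) (σ σ' : Obj → V),
      (∀ oid ∈ R t ∪ W t, σ oid = σ' oid) → ∀ oid ∈ W t, exec t σ oid = exec t σ' oid)
    (σ₀ : Obj → V)
    (L : List (Fin n)) (hnodup : L.Nodup) (hall : ∀ t : Fin n, t ∈ L)
    (horder : ∀ i j : Fin n, VDep R W i j → L.idxOf i < L.idxOf j) :
    ∀ oid : Obj,
      (L.foldl (fun τ t => execV W exec t τ) (tau0 σ₀)) oid 0 = some (σ₀ oid) ∧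
      (∀ t : Fin n, oid ∈ W t →
        (L.foldl (fun τ t => execV W exec t τ) (tau0 σ₀)) oid (vIn W t oid + 1) =
          some (seqState exec σ₀ (t.val + 1) oid)) ∧
      (L.foldl (fun τ t => execV W exec t τ) (tau0 σ₀)) oid (vMax W oid) =
        some (seqState exec σ₀ n oid) := by
  have hInv0 : InvVQ W exec σ₀ (tau0 σ₀) (∅ : Finset (Fin n)) := by
    intro oid
    refine ⟨rfl, ?_⟩
    intro t ht
    simp [tau0]
  have hfold := fold_inv R W exec hmod hdet σ₀ L ∅ (tau0 σ₀) hInv0 hnodup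
    (by simp) (fun t htL i hi => Or.inr ⟨hall i, horder i t hi⟩)
  have hS : ∀ t : Fin n, t ∈ (∅ : Finset (Fin n)) ∪ L.toFinset := by
    intro t
    simp [hall t]
  intro oid
  refine ⟨(hfold oid).1, ?_, ?_⟩
  · intro t ht
    have := (hfold oid).2 t ht
    rwa [if_pos (hS t)] at this
  · by_cases hex : (Finset.univ.filter (fun i : Fin n => oid ∈ W i)).Nonempty
    · set s := Finset.univ.filter (fun i : Fin n => oid ∈ W i) with hs
      set t := s.max' hex with hti
      have hmem : t ∈ s := s.max'_mem hex
      simp only [hs, Finset.mem_filter, Finset.mem_univ, true_and] at hmem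
      have hmax : ∀ k : Fin n, t < k → oid ∉ W k := by
        intro k hk hkW
        have : k ≤ t := s.le_max' k (by simp [hs, hkW])
        exact absurd hk (not_lt.mpr this)
      have hv : vMax W oid = vIn W t oid + 1 := vMax_last W hmem hmax
      have h2 := (hfold oid).2 t hmem
      rw [if_pos (hS t)] at h2
      rw [hv, h2]
      have : seqState exec σ₀ n oid = seqState exec σ₀ (t.val + 1) oid := by
        apply seqState_nowrite W exec hmod σ₀ oid (t.val + 1) n t.isLt
        intro k hk1 _
        exact hmax k hk1
      rw [this]
    · rw [Finset.not_nonempty_iff_eq_empty] at hex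
      have hnw : ∀ i : Fin n, oid ∉ W i := by
        intro i hiW
        have : i ∈ Finset.univ.filter (fun i : Fin n => oid ∈ W i) := by simp [hiW]
        rw [hex] at this
        simp at this
      rw [vMax_zero W hnw, (hfold oid).1]
      have : seqState exec σ₀ n oid = seqState exec σ₀ 0 oid := by
        apply seqState_nowrite W exec hmod σ₀ oid 0 n (Nat.zero_le _)
        intro k _ _
        exact hnw k
      rw [this]
      rfl
end

section
/- (Dynamic conflicts lift to root conflicts.) Suppose transactions i and j (with i ≠ j) both dynamically access a common object oid, i.e., oid ∈ (dR i ∪ dW i) ∩ (dR j ∪ dW j), and at least one dynamically mutates it, i.e., oid ∈ dW i ∨ oid ∈ dW j. Then i and j conflict on root oid with respect to their static sets: root oid ∈ (R i ∪ W i) ∩ (R j ∪ W j) and root oid ∈ W i ∨ root oid ∈ W j. -/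
/-- **Dynamic conflicts lift to root conflicts.** If two distinct transactions both
dynamically access a common object `oid` and at least one dynamically mutates it, then they
conflict on `root oid` with respect to their static read/write sets. -/
theorem dynamic_conflict_lifts_to_root {Tx Obj : Type*} [DecidableEq Obj]
    (R W dR dW : Tx → Finset Obj)
    (hRW : ∀ t : Tx, Disjoint (R t) (W t))
    (root : Obj → Obj)
    (hdW : ∀ (t : Tx) (oid : Obj), oid ∈ dW t → root oid ∈ W t)
    (hdR : ∀ (t : Tx) (oid : Obj), oid ∈ dR t → root oid ∈ R t ∪ W t)
    (i j : Tx) (hij : i ≠ j) (oid : Obj)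
    (hmem : oid ∈ (dR i ∪ dW i) ∩ (dR j ∪ dW j))
    (hmut : oid ∈ dW i ∨ oid ∈ dW j) :
    root oid ∈ (R i ∪ W i) ∩ (R j ∪ W j) ∧ (root oid ∈ W i ∨ root oid ∈ W j) := by
  simp only [Finset.mem_inter, Finset.mem_union] at hmem ⊢
  obtain ⟨hi, hj⟩ := hmem
  have hi' : root oid ∈ R i ∨ root oid ∈ W i := by
    rcases hi with h | h
    · simpa [Finset.mem_union] using hdR i oid h
    · exact Or.inr (hdW i oid h)
  have hj' : root oid ∈ R j ∨ root oid ∈ W j := by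
    rcases hj with h | h
    · simpa [Finset.mem_union] using hdR j oid h
    · exact Or.inr (hdW j oid h)
  refine ⟨⟨hi', hj'⟩, ?_⟩
  rcases hmut with h | h
  · exact Or.inl (hdW i oid h)
  · exact Or.inr (hdW j oid h)
end

section
/- (Swapping adjacent non-conflicting transactions preserves execution.) If transactions i and j do not conflict, then for all lists A B : List (Fin n) and every initial state σ₀ : Obj → V, the sequential execution of A ++ [i, j] ++ B from σ₀ equals the sequential execution of A ++ [j, i] ++ B from σ₀. -/
/-- Swapping two adjacent non-conflicting transactions anywhere in a schedule
preserves the result of sequential execution. -/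
theorem swap_adjacent_nonconflicting {n : ℕ} {Obj V : Type*} [DecidableEq Obj]
    (R W : Fin n → Finset Obj) (hRW : ∀ t : Fin n, Disjoint (R t) (W t))
    (exec : Fin n → (Obj → V) → (Obj → V))
    (hmod : ∀ (t : Fin n) (σ : Obj → V) (oid : Obj), oid ∉ W t → exec t σ oid = σ oid)
    (hdet : ∀ (t : Fin n) (σ σ' : Obj → V),
      (∀ oid ∈ R t ∪ W t, σ oid = σ' oid) → ∀ oid ∈ W t, exec t σ oid = exec t σ' oid)
    (i j : Fin n) (hconf : ¬ Conflict R W i j)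
    (A B : List (Fin n)) (σ₀ : Obj → V) :
    (A ++ [i, j] ++ B).foldl (fun σ t => exec t σ) σ₀ =
      (A ++ [j, i] ++ B).foldl (fun σ t => exec t σ) σ₀ := by
  have key : ∀ σ : Obj → V, exec j (exec i σ) = exec i (exec j σ) := by
    intro σ
    funext oid
    by_cases hi : oid ∈ W i
    · have hj : oid ∉ W j := fun hj =>
        hconf ⟨oid, Finset.mem_union_right _ hi, Finset.mem_union_right _ hj, Or.inl hi⟩
      rw [hmod j _ _ hj]
      refine (hdet i σ (exec j σ) ?_ oid hi).symm ▸ rfl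
      · intro o ho
        have hoj : o ∉ W j := fun h =>
          hconf ⟨o, ho, Finset.mem_union_right _ h, Or.inr h⟩
        exact (hmod j σ o hoj).symm
    · by_cases hj : oid ∈ W j
      · have : oid ∉ W i := hi
        rw [hmod i _ _ hi]
        refine hdet j (exec i σ) σ ?_ oid hj
        intro o ho
        have hoi : o ∉ W i := fun h =>
          hconf ⟨o, Finset.mem_union_right _ h, ho, Or.inl h⟩
        exact hmod i σ o hoi
      · rw [hmod j _ _ hj, hmod i _ _ hi, hmod i _ _ hi, hmod j _ _ hj]
  simp only [List.foldl_append, List.foldl_cons, List.foldl_nil]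
  rw [key]
end
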